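/- Let X* ∈ ℝ^d be a zero-mean random vector with max_{j} E|X*_j|⁴ ≤ ν⁴‖Σ‖² for ν ≥ 1, and let X'(τ) be the entrywise truncation at level τ. Then ‖E X'(τ) X'(τ)ᵀ − E X* X*ᵀ‖_∞ ≤ 2ν⁴‖Σ‖²/τ², where ‖·‖_∞ is the maximum absolute matrix entry. -/

import Mathlib

/-!
The truncated product differs from `a * b` only when `|a| > τ` (or `|b| > τ`), and then
`|a b| τ² ≤ |a|³ |b| ≤ |a|⁴ + |b|⁴`. Integrating this pointwise bound and using the fourth-moment
assumption gives the estimate.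
-/

open MeasureTheory

/-- Entrywise truncation at level τ. -/
noncomputable def trunc (τ x : ℝ) : ℝ := if |x| ≤ τ then x else 0

lemma measurable_trunc (τ : ℝ) : Measurable (trunc τ) :=
  measurable_id.ite (measurableSet_le measurable_abs measurable_const) measurable_const

lemma abs_trunc_le_abs (τ x : ℝ) : |trunc τ x| ≤ |x| := by
  unfold trunc
  split_ifs <;> simp

lemma MeasureTheory.MemLp.trunc_comp {Ω : Type*} [MeasurableSpace Ω] {μ : Measure Ω}
    {p : ENNReal} {f : Ω → ℝ} (hf : MemLp f p μ) (τ : ℝ) :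
    MemLp (fun ω => trunc τ (f ω)) p μ :=
  hf.mono ((measurable_trunc τ).comp_aemeasurable hf.aemeasurable).aestronglyMeasurable
    (ae_of_all _ fun ω => abs_trunc_le_abs τ (f ω))

lemma abs_mul_mul_le_of_le_sq {a b c : ℝ} (hc : c ≤ a ^ 2) :
    |a * b| * c ≤ |a| ^ 4 + |b| ^ 4 := by
  have ha := abs_nonneg a
  have hb := abs_nonneg b
  calc |a * b| * c ≤ |a| * |b| * |a| ^ 2 := by
        rw [abs_mul, ← sq_abs a] at *
        exact mul_le_mul_of_nonneg_left hc (mul_nonneg ha hb)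
    _ ≤ |a| ^ 4 + |b| ^ 4 := by
        nlinarith [sq_nonneg (|a| * |b| - |a| ^ 2), sq_nonneg (|a| ^ 2 - |b| ^ 2),
          mul_nonneg ha hb]

lemma abs_trunc_mul_trunc_sub_mul_mul_sq_le {τ : ℝ} (hτ : 0 ≤ τ) (a b : ℝ) :
    |trunc τ a * trunc τ b - a * b| * τ ^ 2 ≤ |a| ^ 4 + |b| ^ 4 := by
  have sq_le_of_lt {x : ℝ} (hx : τ < |x|) : τ ^ 2 ≤ x ^ 2 := by
    rw [← sq_abs x]
    exact pow_le_pow_left₀ hτ hx.le 2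
  unfold trunc
  split_ifs with ha hb hb
  · simp only [sub_self, abs_zero, zero_mul]
    positivity
  · rw [mul_zero, zero_sub, abs_neg, mul_comm a b, add_comm]
    exact abs_mul_mul_le_of_le_sq (sq_le_of_lt (not_le.mp hb))
  all_goals
    rw [zero_mul, zero_sub, abs_neg]
    exact abs_mul_mul_le_of_le_sq (sq_le_of_lt (not_le.mp ha))

lemma MeasureTheory.MemLp.integrable_mul_of_four {Ω : Type*} [MeasurableSpace Ω]
    {μ : Measure Ω} [IsFiniteMeasure μ] {f g : Ω → ℝ} (hf : MemLp f 4 μ) (hg : MemLp g 4 μ) :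
    Integrable (fun ω => f ω * g ω) μ :=
  (hf.mono_exponent (by norm_num : (2 : ENNReal) ≤ 4)).integrable_mul
    (hg.mono_exponent (by norm_num : (2 : ENNReal) ≤ 4))

theorem abs_integral_trunc_mul_trunc_sub_integral_mul_le {Ω : Type*} [MeasurableSpace Ω]
    {μ : Measure Ω} [IsFiniteMeasure μ] {f g : Ω → ℝ} (hf : MemLp f 4 μ) (hg : MemLp g 4 μ)
    {τ : ℝ} (hτ : 0 < τ) :
    |(∫ ω, trunc τ (f ω) * trunc τ (g ω) ∂μ) - ∫ ω, f ω * g ω ∂μ| ≤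
      ((∫ ω, |f ω| ^ 4 ∂μ) + ∫ ω, |g ω| ^ 4 ∂μ) / τ ^ 2 := by
  have hf4 : Integrable (fun ω => |f ω| ^ 4) μ := hf.integrable_norm_pow (by norm_num)
  have hg4 : Integrable (fun ω => |g ω| ^ 4) μ := hg.integrable_norm_pow (by norm_num)
  rw [← integral_sub ((hf.trunc_comp τ).integrable_mul_of_four (hg.trunc_comp τ))
    (hf.integrable_mul_of_four hg), ← integral_add hf4 hg4, ← integral_div]
  refine (abs_integral_le_integral_abs).trans
    (integral_mono_of_nonneg (ae_of_all _ fun ω => abs_nonneg _) ((hf4.add hg4).div_const _)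
      (ae_of_all _ fun ω => ?_))
  rw [le_div_iff₀ (by positivity)]
  exact abs_trunc_mul_trunc_sub_mul_mul_sq_le hτ.le (f ω) (g ω)

/-- `normSig` plays the role of the operator norm `‖Σ‖` of the covariance `Σ = E X Xᵀ`. -/
theorem truncation_covariance_bound_general {Ω : Type*} [MeasurableSpace Ω]
    (μ : Measure Ω) [IsProbabilityMeasure μ] {d : ℕ}
    (X : Ω → Fin d → ℝ)
    (ν normSig τ : ℝ) (hτ : 0 < τ)
    (hLp : ∀ j, MemLp (fun ω => X ω j) 4 μ)
    (hmom : ∀ j, ∫ ω, |X ω j| ^ 4 ∂μ ≤ ν ^ 4 * normSig ^ 2) :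
    ∀ j j' : Fin d,
      |(∫ ω, trunc τ (X ω j) * trunc τ (X ω j') ∂μ) - ∫ ω, X ω j * X ω j' ∂μ| ≤
        2 * ν ^ 4 * normSig ^ 2 / τ ^ 2 := by
  intro j j'
  calc _ ≤ ((∫ ω, |X ω j| ^ 4 ∂μ) + ∫ ω, |X ω j'| ^ 4 ∂μ) / τ ^ 2 :=
        abs_integral_trunc_mul_trunc_sub_integral_mul_le (hLp j) (hLp j') hτ
    _ ≤ (ν ^ 4 * normSig ^ 2 + ν ^ 4 * normSig ^ 2) / τ ^ 2 := by
        gcongr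
        exacts [hmom j, hmom j']
    _ = 2 * ν ^ 4 * normSig ^ 2 / τ ^ 2 := by ring

/-- If the mean-zero random vector `X` satisfies `max_j E|X_j|⁴ ≤ ν⁴‖Σ‖²`, then
`‖E X'(τ) X'(τ)ᵀ − E X Xᵀ‖_∞ ≤ 2ν⁴‖Σ‖²/τ²`, entrywise. Here `normSig` plays the role
of the operator norm `‖Σ‖` of the covariance `Σ = E X Xᵀ`. -/
theorem truncation_covariance_bound {Ω : Type*} [MeasurableSpace Ω]
    (μ : Measure Ω) [IsProbabilityMeasure μ] {d : ℕ}
    (X : Ω → Fin d → ℝ) (hmeas : ∀ j, Measurable fun ω => X ω j)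
    (ν normSig τ : ℝ) (hν : 1 ≤ ν) (hnorm : 0 ≤ normSig) (hτ : 0 < τ)
    (hLp : ∀ j, MemLp (fun ω => X ω j) 4 μ)
    (hmean : ∀ j, ∫ ω, X ω j ∂μ = 0)
    (hmom : ∀ j, ∫ ω, |X ω j| ^ 4 ∂μ ≤ ν ^ 4 * normSig ^ 2) :
    ∀ j j' : Fin d,
      |(∫ ω, trunc τ (X ω j) * trunc τ (X ω j') ∂μ) - ∫ ω, X ω j * X ω j' ∂μ| ≤
        2 * ν ^ 4 * normSig ^ 2 / τ ^ 2 :=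
  truncation_covariance_bound_general μ X ν normSig τ hτ hLp hmom
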